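/- arXiv:0901.2194 — 6 statements merged into one kernel-verified Lean document; each statement's English description precedes it below -/
import Mathlib

section
/- The function r(p) defined piecewise as: r(p) = log2(1 + h11·p) if r2 ≤ log2(1 + h21·p2/(1 + h11·p)); r(p) = log2(1 + h11·p + h21·p2) − r2 if log2(1 + h21·p2/(1+h11·p)) < r2 ≤ log2(1 + h21·p2); and r(p) = log2(1 + h11·p/(1 + h21·p2)) if r2 > log2(1 + h21·p2), is a concave function of p on [0, ∞). -/
/-! Write `A = h21 * p2 ≥ 0`. Since `log (1 + A / (1 + h11 p)) = log (1 + h11 p + A) - log (1 + h11 p)`,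
when `r2 ≤ log (1 + A)` the first two branches together are the pointwise minimum of
`log (1 + h11 p)` and `log (1 + h11 p + A) - r2`; when `r2 > log (1 + A)` the first branch never
occurs, because `log (1 + A / (1 + h11 p)) ≤ log (1 + A)`, and the rate is `log (1 + h11 p / (1 + A))`.
In both cases it is a minimum of logarithms of affine functions, hence concave. -/

open Real Set

theorem concaveOn_logb_Ioi {b : ℝ} (hb : 1 ≤ b) : ConcaveOn ℝ (Ioi 0) (logb b) := by
  refine (strictConcaveOn_log_Ioi.concaveOn.smul (inv_nonneg.2 (log_nonneg hb))).congr
    fun x _ => ?_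
  simp only [smul_eq_mul, logb, inv_mul_eq_div]

theorem concaveOn_logb_add_mul {b c a : ℝ} (hb : 1 ≤ b) (hc : 0 < c) (ha : 0 ≤ a) :
    ConcaveOn ℝ (Ici 0) (fun p => logb b (c + a * p)) := by
  have hcomp := (concaveOn_logb_Ioi hb).comp_affineMap (AffineMap.lineMap c (c + a))
  refine (hcomp.subset (fun p (hp : 0 ≤ p) => ?_) (convex_Ici 0)).congr fun p _ => ?_
  · simp only [mem_preimage, AffineMap.lineMap_apply_module', mem_Ioi, smul_eq_mul]
    nlinarith
  · simp only [Function.comp_apply, AffineMap.lineMap_apply_module', smul_eq_mul]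
    ring_nf

theorem logb_one_add_div {b u A : ℝ} (hu : u ≠ 0) (huA : u + A ≠ 0) :
    logb b (1 + A / u) = logb b (u + A) - logb b u := by
  rw [← logb_div huA hu, add_div, div_self hu]

/-- The opportunistic multiuser-detection rate; `A` stands for the received interference
power `h21 * p2`. -/
noncomputable def omudRate (h11 A r2 p : ℝ) : ℝ :=
  if r2 ≤ logb 2 (1 + A / (1 + h11 * p)) then
    logb 2 (1 + h11 * p)
  else if r2 ≤ logb 2 (1 + A) then
    logb 2 (1 + h11 * p + A) - r2
  else
    logb 2 (1 + h11 * p / (1 + A))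

section

variable {h11 A r2 p : ℝ}

theorem omudRate_eq_min (hh11 : 0 ≤ h11) (hA : 0 ≤ A) (hr2 : r2 ≤ logb 2 (1 + A))
    (hp : 0 ≤ p) :
    omudRate h11 A r2 p = min (logb 2 (1 + h11 * p)) (logb 2 (1 + h11 * p + A) - r2) := by
  have hpos : 0 < 1 + h11 * p := by positivity
  have hsplit := logb_one_add_div (b := 2) hpos.ne' (by positivity : 1 + h11 * p + A ≠ 0)
  unfold omudRate
  split_ifs with hfirst
  · exact (min_eq_left (by linarith)).symm
  · exact (min_eq_right (by linarith)).symm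

theorem omudRate_eq_of_lt (hh11 : 0 ≤ h11) (hA : 0 ≤ A) (hr2 : logb 2 (1 + A) < r2)
    (hp : 0 ≤ p) :
    omudRate h11 A r2 p = logb 2 (1 + h11 / (1 + A) * p) := by
  have hpos : 0 < 1 + h11 * p := by positivity
  have hdecode : logb 2 (1 + A / (1 + h11 * p)) ≤ logb 2 (1 + A) :=
    logb_le_logb_of_le one_lt_two (by positivity)
      (by gcongr; exact div_le_self hA (by nlinarith))
  rw [omudRate, if_neg (by linarith), if_neg hr2.not_ge, div_mul_eq_mul_div]

theorem concaveOn_omudRate (hh11 : 0 ≤ h11) (hA : 0 ≤ A) :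
    ConcaveOn ℝ (Ici 0) (omudRate h11 A r2) := by
  rcases le_or_gt r2 (logb 2 (1 + A)) with hr2 | hr2
  · have hdirect : ConcaveOn ℝ (Ici 0) (fun p => logb 2 (1 + h11 * p)) :=
      concaveOn_logb_add_mul one_le_two one_pos hh11
    have hdecoded : ConcaveOn ℝ (Ici 0) (fun p => logb 2 (1 + h11 * p + A) - r2) := by
      refine ((concaveOn_logb_add_mul (c := 1 + A) one_le_two (by positivity) hh11).sub
        (convexOn_const r2 (convex_Ici 0))).congr fun p _ => ?_
      simp only [Pi.sub_apply, add_right_comm]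
    exact (hdirect.inf hdecoded).congr fun p hp => (omudRate_eq_min hh11 hA hr2 hp).symm
  · exact (concaveOn_logb_add_mul one_le_two one_pos (by positivity)).congr
      fun p hp => (omudRate_eq_of_lt hh11 hA hr2 hp).symm

end

theorem stmt_0_general (h11 h21 p2 r2 : ℝ) (hh11 : 0 < h11) (hh21 : 0 < h21)
    (hp2 : 0 ≤ p2) :
    ConcaveOn ℝ (Set.Ici (0:ℝ)) (fun p =>
      if r2 ≤ Real.logb 2 (1 + h21 * p2 / (1 + h11 * p)) then
        Real.logb 2 (1 + h11 * p)
      else if r2 ≤ Real.logb 2 (1 + h21 * p2) then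
        Real.logb 2 (1 + h11 * p + h21 * p2) - r2
      else
        Real.logb 2 (1 + h11 * p / (1 + h21 * p2))) :=
  concaveOn_omudRate hh11.le (mul_nonneg hh21.le hp2)

/-- The piecewise rate function of user 1 with opportunistic multiuser detection
is concave on [0, ∞). -/
theorem stmt_0 (h11 h21 p2 r2 : ℝ) (hh11 : 0 < h11) (hh21 : 0 < h21)
    (hp2 : 0 ≤ p2) (hr2 : 0 ≤ r2) :
    ConcaveOn ℝ (Set.Ici (0:ℝ)) (fun p =>
      if r2 ≤ Real.logb 2 (1 + h21 * p2 / (1 + h11 * p)) then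
        Real.logb 2 (1 + h11 * p)
      else if r2 ≤ Real.logb 2 (1 + h21 * p2) then
        Real.logb 2 (1 + h11 * p + h21 * p2) - r2
      else
        Real.logb 2 (1 + h11 * p / (1 + h21 * p2))) :=
  stmt_0_general h11 h21 p2 r2 hh11 hh21 hp2
end

section
/- If r2 < log2(1 + h21·p2), then r(p) = min( log2(1 + h11·p), log2(1 + h11·p + h21·p2) − r2 ) for all p ≥ 0, where r(p) is user 1's rate function with opportunistic multiuser detection. -/
/-! The event "user 2's message is decodable treating user 1 as noise" reads
`r2 ≤ log (1 + h21 p2 / (1 + h11 p))`, and by the chain rule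
`log (1 + c / (1 + a)) = log (1 + a + c) - log (1 + a)` this is exactly the condition
`f p ≤ h p`; the hypothesis on `r2` rules out the third branch, so the two remaining
branches select the smaller of `f p` and `h p`. -/

lemma Real.logb_one_add_div_one_add (b a c : ℝ) (ha : 1 + a ≠ 0) (hac : 1 + a + c ≠ 0) :
    Real.logb b (1 + c / (1 + a)) = Real.logb b (1 + a + c) - Real.logb b (1 + a) := by
  rw [← Real.logb_div hac ha, add_div, div_self ha, add_div' _ _ _ ha]

lemma ite_le_sub_eq_min {α : Type*} [AddCommGroup α] [LinearOrder α] [IsOrderedAddMonoid α]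
    (c f g : α) : (if c ≤ g - f then f else g - c) = min f (g - c) := by
  split_ifs with h
  · exact (min_eq_left (le_sub_comm.mp h)).symm
  · exact (min_eq_right (sub_le_comm.mp (not_le.mp h).le)).symm

theorem stmt_2_general (h11 h21 p2 r2 : ℝ) (hh11 : 0 < h11) (hh21 : 0 < h21)
    (hp2 : 0 < p2) (hlt : r2 < Real.logb 2 (1 + h21 * p2))
    (r : ℝ → ℝ)
    (hr : r = fun p =>
      if r2 ≤ Real.logb 2 (1 + h21 * p2 / (1 + h11 * p)) then
        Real.logb 2 (1 + h11 * p)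
      else if r2 ≤ Real.logb 2 (1 + h21 * p2) then
        Real.logb 2 (1 + h11 * p + h21 * p2) - r2
      else
        Real.logb 2 (1 + h11 * p / (1 + h21 * p2))) :
    ∀ p, 0 ≤ p →
      r p = min (Real.logb 2 (1 + h11 * p))
                (Real.logb 2 (1 + h11 * p + h21 * p2) - r2) := by
  intro p hp
  have hchain := Real.logb_one_add_div_one_add 2 (h11 * p) (h21 * p2)
    (by positivity) (by positivity)
  subst hr
  simp only [hchain, if_pos hlt.le]
  exact ite_le_sub_eq_min _ _ _

/-- If r2 < log2(1 + h21 p2), the rate function equals the minimum of the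
successive-decoding and joint-decoding rates for all p ≥ 0. -/
theorem stmt_2 (h11 h21 p2 r2 : ℝ) (hh11 : 0 < h11) (hh21 : 0 < h21)
    (hp2 : 0 < p2) (hr2 : 0 ≤ r2) (hlt : r2 < Real.logb 2 (1 + h21 * p2))
    (r : ℝ → ℝ)
    (hr : r = fun p =>
      if r2 ≤ Real.logb 2 (1 + h21 * p2 / (1 + h11 * p)) then
        Real.logb 2 (1 + h11 * p)
      else if r2 ≤ Real.logb 2 (1 + h21 * p2) then
        Real.logb 2 (1 + h11 * p + h21 * p2) - r2
      else
        Real.logb 2 (1 + h11 * p / (1 + h21 * p2))) :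
    ∀ p, 0 ≤ p →
      r p = min (Real.logb 2 (1 + h11 * p))
                (Real.logb 2 (1 + h11 * p + h21 * p2) - r2) :=
  stmt_2_general h11 h21 p2 r2 hh11 hh21 hp2 hlt r hr
end

section
/- Let a(p) = min(f_λ(p), h_λ(p)) where f_λ(p) = log2(1+h11p) − λp and h_λ(p) = log2(1+h11p+h21p2) − r2 − λp, with 0 < r2 < log2(1+h21p2). If p_th ≥ p^{(f)}, then a attains its maximum over p ≥ 0 at p^{(f)}, where p_th = (1/h11)(h21p2/(2^{r2}−1) − 1) and p^{(f)} = max(0, 1/((ln2)λ) − 1/h11). -/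
/-!
`a = min (f_λ, h_λ) ≤ f_λ ≤ f_λ(p^{(f)})`, so it suffices that the minimum is attained by `f_λ` at
`p^{(f)}`, i.e. `f_λ(p^{(f)}) ≤ h_λ(p^{(f)})`. Since `log₂ (2^{r₂} x) = r₂ + log₂ x`, this amounts to
`(2^{r₂} - 1)(1 + h₁₁ p^{(f)}) ≤ h₂₁ p₂`, which is the hypothesis `p^{(f)} ≤ p_th` with the
denominators cleared. The maximality of `f_λ` at `p^{(f)}` is the tangent-line bound for the concave
function `log`.
-/

open Real Set

theorem isMaxOn_min_of_isMaxOn_of_le {α β : Type*} [LinearOrder β] {f g : α → β} {s : Set α}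
    {x : α} (hf : IsMaxOn f s x) (hfg : f x ≤ g x) :
    IsMaxOn (fun p => min (f p) (g p)) s x := fun p hp =>
  calc min (f p) (g p) ≤ f p := min_le_left _ _
    _ ≤ f x := hf hp
    _ = min (f x) (g x) := (min_eq_left hfg).symm

theorem Real.log_sub_log_le_div {x y : ℝ} (hx : 0 < x) (hy : 0 < y) :
    log x - log y ≤ (x - y) / y := by
  have := log_le_sub_one_of_pos (div_pos hx hy)
  rwa [log_div hx.ne' hy.ne', ← div_self hy.ne', ← sub_div] at this

/-- `p ↦ log₂ (1 + a p) - c p` has derivative `a / ((1 + a p) log 2) - c`, which vanishes at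
`1 / (c log 2) - 1 / a`; its maximum on `p ≥ 0` is there, or at `0` if that point is negative. -/
theorem isMaxOn_logb_one_add_mul_sub_mul {a c : ℝ} (ha : 0 < a) (hc : 0 < c) :
    IsMaxOn (fun p => logb 2 (1 + a * p) - c * p) (Ici 0)
      (max 0 (1 / (log 2 * c) - 1 / a)) := by
  have hL : 0 < log 2 := log_pos one_lt_two
  have hLc : 0 < log 2 * c := mul_pos hL hc
  generalize hq : max 0 (1 / (log 2 * c) - 1 / a) = q
  have hq0 : 0 ≤ q := hq ▸ le_max_left _ _
  have hq1 : 0 < 1 + a * q := by positivity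
  intro p (hp : 0 ≤ p)
  have hp1 : 0 < 1 + a * p := by positivity
  have slope : (1 + a * p - (1 + a * q)) / (1 + a * q) ≤ log 2 * c * (p - q) := by
    rw [div_le_iff₀ hq1]
    rcases max_choice 0 (1 / (log 2 * c) - 1 / a) with h | h <;> rw [hq] at h
    · have : a ≤ log 2 * c := by
        have := le_max_right 0 (1 / (log 2 * c) - 1 / a)
        rwa [hq, h, sub_nonpos, one_div_le_one_div hLc ha] at this
      subst h
      nlinarith
    · have : log 2 * c * (1 + a * q) = a := by
        rw [h]; field_simp; ring
      linear_combination (q - p) * this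
  have tangent := (log_sub_log_le_div hp1 hq1).trans slope
  show log (1 + a * p) / log 2 - c * p ≤ log (1 + a * q) / log 2 - c * q
  have : log (1 + a * p) / log 2 - log (1 + a * q) / log 2 ≤ c * (p - q) := by
    rw [← sub_div, div_le_iff₀ hL]; linarith
  linarith

theorem logb_add_le_logb_add_of_mul_le {x b r : ℝ} (hx : 0 < x) (h : (2 ^ r - 1) * x ≤ b) :
    logb 2 x + r ≤ logb 2 (x + b) := by
  have hpos : 0 < 2 ^ r * x := by positivity
  have := logb_le_logb_of_le one_lt_two hpos (show 2 ^ r * x ≤ x + b by linarith)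
  rwa [logb_mul (by positivity) hx.ne', logb_rpow two_pos (by norm_num), add_comm] at this

theorem stmt_6_general (lam h11 h21 p2 r2 : ℝ) (hlam : 0 < lam) (hh11 : 0 < h11)
    (hr2 : 0 < r2)
    (pth pf : ℝ)
    (hpth : pth = (1 / h11) * (h21 * p2 / (2 ^ r2 - 1) - 1))
    (hpf : pf = max 0 (1 / (Real.log 2 * lam) - 1 / h11))
    (hcase : pf ≤ pth) :
    IsMaxOn (fun p => min (Real.logb 2 (1 + h11 * p) - lam * p)
        (Real.logb 2 (1 + h11 * p + h21 * p2) - r2 - lam * p))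
      (Set.Ici (0:ℝ)) pf := by
  have hpf1 : 0 < 1 + h11 * pf := by
    have : 0 ≤ pf := hpf ▸ le_max_left _ _
    positivity
  have ht : 0 < (2 : ℝ) ^ r2 - 1 := sub_pos.2 (one_lt_rpow one_lt_two hr2)
  have hclear : (2 ^ r2 - 1) * (1 + h11 * pf) ≤ h21 * p2 := by
    rw [hpth, one_div_mul_eq_div, le_div_iff₀ hh11, le_sub_iff_add_le, le_div_iff₀ ht] at hcase
    linarith
  refine isMaxOn_min_of_isMaxOn_of_le (hpf ▸ isMaxOn_logb_one_add_mul_sub_mul hh11 hlam) ?_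
  linarith [logb_add_le_logb_add_of_mul_le hpf1 hclear]

/-- Case p_th ≥ p^{(f)}: a = min(f_λ, h_λ) attains its maximum over p ≥ 0 at p^{(f)}. -/
theorem stmt_6 (lam h11 h21 p2 r2 : ℝ) (hlam : 0 < lam) (hh11 : 0 < h11)
    (hh21 : 0 < h21) (hp2 : 0 < p2) (hr2 : 0 < r2)
    (hlt : r2 < Real.logb 2 (1 + h21 * p2))
    (pth pf : ℝ)
    (hpth : pth = (1 / h11) * (h21 * p2 / (2 ^ r2 - 1) - 1))
    (hpf : pf = max 0 (1 / (Real.log 2 * lam) - 1 / h11))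
    (hcase : pf ≤ pth) :
    IsMaxOn (fun p => min (Real.logb 2 (1 + h11 * p) - lam * p)
        (Real.logb 2 (1 + h11 * p + h21 * p2) - r2 - lam * p))
      (Set.Ici (0:ℝ)) pf :=
  stmt_6_general lam h11 h21 p2 r2 hlam hh11 hr2 pth pf hpth hpf hcase
end

section
/- Under the same setup, if p_th ≤ p^{(h)} where p^{(h)} = max(0, 1/((ln2)λ) − (1+h21p2)/h11), then a(p) = min(f_λ(p), h_λ(p)) attains its maximum over p ≥ 0 at p^{(h)}. -/
/-!
Writing `c = 1 + h₂₁ p₂`, the function `h_λ(p) = log₂(c + h₁₁ p) - r₂ - λ p` is concave and its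
maximiser over `p ≥ 0` is the water-filling level `p^{(h)}`. The condition `p_th ≤ p^{(h)}` is
equivalent to `c + h₁₁ p^{(h)} ≤ 2^{r₂} (1 + h₁₁ p^{(h)})`, i.e. `h_λ ≤ f_λ` at `p^{(h)}`.
Hence for every `p ≥ 0`, `min(f_λ, h_λ)(p) ≤ h_λ(p) ≤ h_λ(p^{(h)}) = min(f_λ, h_λ)(p^{(h)})`.
-/

open Real Set

lemma isMaxOn_logb_add_mul_sub_mul {a c lam : ℝ} (ha : 0 < a) (hc : 0 < c) (hlam : 0 < lam) :
    IsMaxOn (fun p => logb 2 (c + a * p) - lam * p) (Ici 0)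
      (max 0 (1 / (log 2 * lam) - c / a)) := by
  set q := max 0 (1 / (log 2 * lam) - c / a) with hq
  intro p (hp : 0 ≤ p)
  have hL : 0 < log 2 * lam := mul_pos (log_pos one_lt_two) hlam
  have hq0 : 0 ≤ q := le_max_left _ _
  have hcp : 0 < c + a * p := by positivity
  have hcq : 0 < c + a * q := by positivity
  have hslope : a ≤ log 2 * lam * (c + a * q) := by
    have : 1 / (log 2 * lam) - c / a ≤ q := le_max_right _ _
    rw [sub_le_iff_le_add, add_div' _ _ _ ha.ne', div_le_div_iff₀ hL ha] at this
    linarith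
  -- Either `p ≥ q` and the slope at `q` is at most `log 2 * λ`, or `q > 0` is the critical point.
  have hsign : (p - q) * (a - log 2 * lam * (c + a * q)) ≤ 0 := by
    rcases le_or_gt q p with hpq | hpq
    · exact mul_nonpos_of_nonneg_of_nonpos (sub_nonneg.2 hpq) (sub_nonpos.2 hslope)
    · have hcrit : q = 1 / (log 2 * lam) - c / a := by
        rw [hq, max_eq_right]
        by_contra! h
        rw [hq, max_eq_left h.le] at hpq
        linarith
      have : a - log 2 * lam * (c + a * q) = 0 := by
        rw [hcrit]; field_simp; ring
      rw [this, mul_zero]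
  have hlog : log (c + a * p) - log (c + a * q) ≤ log 2 * lam * (p - q) :=
    calc log (c + a * p) - log (c + a * q)
        = log ((c + a * p) / (c + a * q)) := (log_div hcp.ne' hcq.ne').symm
      _ ≤ (c + a * p) / (c + a * q) - 1 := log_le_sub_one_of_pos (by positivity)
      _ = a * (p - q) / (c + a * q) := by field_simp; ring
      _ ≤ log 2 * lam * (p - q) := by
        rw [div_le_iff₀ hcq]; linarith
  have hlogb : logb 2 (c + a * p) - logb 2 (c + a * q) ≤ lam * (p - q) := by
    rw [logb, logb, ← sub_div, div_le_iff₀ (log_pos one_lt_two)]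
    linarith
  show logb 2 (c + a * p) - lam * p ≤ logb 2 (c + a * q) - lam * q
  linarith

lemma logb_add_sub_le_logb {b r x y : ℝ} (hb : 1 < b) (hx : 0 < x) (hy : 0 ≤ y)
    (hxy : y ≤ (b ^ r - 1) * x) : logb b (x + y) - r ≤ logb b x := by
  have hle : logb b (x + y) ≤ logb b (b ^ r * x) :=
    logb_le_logb_of_le hb (by positivity) (by linarith)
  rw [logb_mul (by positivity) hx.ne', logb_rpow (by positivity) hb.ne'] at hle
  linarith

theorem stmt_7_general (lam h11 h21 p2 r2 : ℝ) (hlam : 0 < lam) (hh11 : 0 < h11)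
    (hh21 : 0 < h21) (hp2 : 0 < p2) (hr2 : 0 < r2)
    (pth ph : ℝ)
    (hpth : pth = (1 / h11) * (h21 * p2 / (2 ^ r2 - 1) - 1))
    (hph : ph = max 0 (1 / (Real.log 2 * lam) - (1 + h21 * p2) / h11))
    (hcase : pth ≤ ph) :
    IsMaxOn (fun p => min (Real.logb 2 (1 + h11 * p) - lam * p)
        (Real.logb 2 (1 + h11 * p + h21 * p2) - r2 - lam * p))
      (Set.Ici (0:ℝ)) ph := by
  have hrearr (p : ℝ) : 1 + h11 * p + h21 * p2 = (1 + h21 * p2) + h11 * p := by ring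
  have hph0 : 0 ≤ ph := hph ▸ le_max_left _ _
  have hgap : 0 < 2 ^ r2 - (1 : ℝ) := sub_pos.2 (one_lt_rpow one_lt_two hr2)
  have hthreshold : h21 * p2 ≤ (2 ^ r2 - 1) * (1 + h11 * ph) := by
    rw [hpth, one_div_mul_eq_div, div_le_iff₀ hh11, sub_le_iff_le_add, div_le_iff₀ hgap] at hcase
    linarith
  have hh_le_f : logb 2 (1 + h11 * ph + h21 * p2) - r2 ≤ logb 2 (1 + h11 * ph) :=
    logb_add_sub_le_logb one_lt_two (by positivity) (by positivity) hthreshold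
  have hmax := isMaxOn_logb_add_mul_sub_mul hh11 (by positivity : 0 < 1 + h21 * p2) hlam
  rw [← hph] at hmax
  intro p hp
  have hp' := hmax hp
  simp only [mem_ofPred_eq, ← hrearr] at hp' ⊢
  rw [min_eq_right (a := logb 2 (1 + h11 * ph) - lam * ph) (by linarith)]
  exact (min_le_right _ _).trans (by linarith)

/-- Case p_th ≤ p^{(h)}: a = min(f_λ, h_λ) attains its maximum over p ≥ 0 at p^{(h)}. -/
theorem stmt_7 (lam h11 h21 p2 r2 : ℝ) (hlam : 0 < lam) (hh11 : 0 < h11)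
    (hh21 : 0 < h21) (hp2 : 0 < p2) (hr2 : 0 < r2)
    (hlt : r2 < Real.logb 2 (1 + h21 * p2))
    (pth ph : ℝ)
    (hpth : pth = (1 / h11) * (h21 * p2 / (2 ^ r2 - 1) - 1))
    (hph : ph = max 0 (1 / (Real.log 2 * lam) - (1 + h21 * p2) / h11))
    (hcase : pth ≤ ph) :
    IsMaxOn (fun p => min (Real.logb 2 (1 + h11 * p) - lam * p)
        (Real.logb 2 (1 + h11 * p + h21 * p2) - r2 - lam * p))
      (Set.Ici (0:ℝ)) ph :=
  stmt_7_general lam h11 h21 p2 r2 hlam hh11 hh21 hp2 hr2 pth ph hpth hph hcase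
end

section
/- Under the same setup, if p^{(h)} < p_th < p^{(f)}, then a(p) = min(f_λ(p), h_λ(p)) attains its maximum over p ≥ 0 at p = p_th, and moreover f_λ(p_th) = h_λ(p_th). -/
/-!
Both `f_λ` and `h_λ` have the shape `p ↦ log₂ (a + b p) - λ p`, which by the tangent-line bounds
`1 - u/v ≤ log v - log u ≤ v/u - 1` increases as long as `(ln 2) λ (a + b p) ≤ b` and decreases
once `b ≤ (ln 2) λ (a + b p)`. Hence `f_λ` increases on `[0, p^{(f)}]` and `h_λ` decreases on
`[p^{(h)}, ∞)`. The threshold `p_th` lies in between and is exactly where `f_λ = h_λ`, so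
`min (f_λ, h_λ)` is at most `f_λ(p_th)` left of `p_th` and at most `h_λ(p_th)` right of it.
-/

open Real

section PenalizedRate

variable {a b lam x y : ℝ}

theorem logb_add_mul_sub_mul_le_of_mul_le (hb : 0 ≤ b) (hx : 0 < a + b * x) (hxy : x ≤ y)
    (hy : log 2 * lam * (a + b * y) ≤ b) :
    logb 2 (a + b * x) - lam * x ≤ logb 2 (a + b * y) - lam * y := by
  have hv : 0 < a + b * y := by nlinarith
  have hlog : b * (y - x) / (a + b * y) ≤ log (a + b * y) - log (a + b * x) := by
    have := one_sub_inv_le_log_of_pos (div_pos hv hx)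
    rw [log_div hv.ne' hx.ne', inv_div] at this
    convert this using 1
    field_simp
    ring
  have hslope : log 2 * lam * (y - x) ≤ b * (y - x) / (a + b * y) := by
    rw [le_div_iff₀ hv]
    nlinarith [mul_le_mul_of_nonneg_left hy (sub_nonneg.2 hxy)]
  have hgain : lam * (y - x) ≤ logb 2 (a + b * y) - logb 2 (a + b * x) := by
    rw [logb, logb, div_sub_div_same, le_div_iff₀ (log_pos one_lt_two)]
    linarith
  linarith

theorem logb_add_mul_sub_mul_le_of_le_mul (hb : 0 ≤ b) (hx : 0 < a + b * x) (hxy : x ≤ y)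
    (hx' : b ≤ log 2 * lam * (a + b * x)) :
    logb 2 (a + b * y) - lam * y ≤ logb 2 (a + b * x) - lam * x := by
  have hv : 0 < a + b * y := by nlinarith
  have hlog : log (a + b * y) - log (a + b * x) ≤ b * (y - x) / (a + b * x) := by
    have := log_le_sub_one_of_pos (div_pos hv hx)
    rw [log_div hv.ne' hx.ne'] at this
    convert this using 1
    field_simp
    ring
  have hslope : b * (y - x) / (a + b * x) ≤ log 2 * lam * (y - x) := by
    rw [div_le_iff₀ hx]
    nlinarith [mul_le_mul_of_nonneg_left hx' (sub_nonneg.2 hxy)]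
  have hloss : logb 2 (a + b * y) - logb 2 (a + b * x) ≤ lam * (y - x) := by
    rw [logb, logb, div_sub_div_same, div_le_iff₀ (log_pos one_lt_two)]
    linarith
  linarith

theorem mul_add_mul_le_of_lt_inv_sub_div {k : ℝ} (hb : 0 < b) (hk : 0 < k)
    (hx : x < 1 / k - a / b) : k * (a + b * x) ≤ b := by
  have : (a + b * x) / b < 1 / k := by
    rw [add_div, mul_div_cancel_left₀ _ hb.ne']
    linarith
  rw [div_lt_div_iff₀ hb hk] at this
  linarith

theorem le_mul_add_mul_of_inv_sub_div_lt {k : ℝ} (hb : 0 < b) (hk : 0 < k)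
    (hx : 1 / k - a / b < x) : b ≤ k * (a + b * x) := by
  have : 1 / k < (a + b * x) / b := by
    rw [add_div, mul_div_cancel_left₀ _ hb.ne']
    linarith
  rw [div_lt_div_iff₀ hk hb] at this
  linarith

end PenalizedRate

theorem isMaxOn_min_of_le_of_le {α β : Type*} [LinearOrder α] [LinearOrder β] {f g : α → β}
    {s : Set α} {t : α} (hf : ∀ p ∈ s, p ≤ t → f p ≤ f t) (hg : ∀ p ∈ s, t ≤ p → g p ≤ g t)
    (hfg : f t = g t) : IsMaxOn (fun p => min (f p) (g p)) s t := by
  intro p hp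
  change min (f p) (g p) ≤ min (f t) (g t)
  rw [← hfg, min_self]
  rcases le_total p t with hpt | htp
  · exact (min_le_left _ _).trans (hf p hp hpt)
  · exact (min_le_right _ _).trans (hfg ▸ hg p hp htp)

theorem stmt_8_general (lam h11 h21 p2 r2 : ℝ) (hlam : 0 < lam) (hh11 : 0 < h11)
    (hr2 : 0 < r2)
    (pth pf ph : ℝ)
    (hpth : pth = (1 / h11) * (h21 * p2 / (2 ^ r2 - 1) - 1))
    (hpf : pf = max 0 (1 / (Real.log 2 * lam) - 1 / h11))
    (hph : ph = max 0 (1 / (Real.log 2 * lam) - (1 + h21 * p2) / h11))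
    (hcase1 : ph < pth) (hcase2 : pth < pf) :
    IsMaxOn (fun p => min (Real.logb 2 (1 + h11 * p) - lam * p)
        (Real.logb 2 (1 + h11 * p + h21 * p2) - r2 - lam * p))
      (Set.Ici (0:ℝ)) pth ∧
    Real.logb 2 (1 + h11 * pth) - lam * pth =
      Real.logb 2 (1 + h11 * pth + h21 * p2) - r2 - lam * pth := by
  set c := h21 * p2
  have hloglam : 0 < log 2 * lam := mul_pos (log_pos one_lt_two) hlam
  obtain ⟨hpth_pos, hph_lt⟩ := max_lt_iff.mp (hph ▸ hcase1)
  have hpf_lt := (lt_max_iff.mp (hpf ▸ hcase2)).resolve_left (not_lt.mpr hpth_pos.le)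
  have hu : 0 < 1 + h11 * pth := by positivity
  have hshift : 1 + h11 * pth + c = 2 ^ r2 * (1 + h11 * pth) := by
    have h2r2 : (2 : ℝ) ^ r2 - 1 ≠ 0 := (sub_pos.2 (one_lt_rpow one_lt_two hr2)).ne'
    rw [hpth]
    field_simp
    ring
  have heq : logb 2 (1 + h11 * pth) - lam * pth =
      logb 2 (1 + h11 * pth + c) - r2 - lam * pth := by
    rw [hshift, logb_mul (by positivity) hu.ne', logb_rpow two_pos (by norm_num)]
    ring
  have hf_rising := mul_add_mul_le_of_lt_inv_sub_div hh11 hloglam hpf_lt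
  have hh_falling := le_mul_add_mul_of_inv_sub_div_lt hh11 hloglam hph_lt
  refine ⟨isMaxOn_min_of_le_of_le (fun p (hp : 0 ≤ p) hle => ?_) (fun p _ hle => ?_) heq, heq⟩
  · exact logb_add_mul_sub_mul_le_of_mul_le hh11.le (by positivity) hle hf_rising
  · have hv : 0 < (1 + c) + h11 * pth := by rw [add_right_comm, hshift]; positivity
    have := logb_add_mul_sub_mul_le_of_le_mul hh11.le hv hle hh_falling
    simp only [add_right_comm (1 : ℝ) c] at this
    linarith

/-- Case p^{(h)} < p_th < p^{(f)}: a = min(f_λ, h_λ) attains its maximum over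
p ≥ 0 at p_th, where also f_λ(p_th) = h_λ(p_th). -/
theorem stmt_8 (lam h11 h21 p2 r2 : ℝ) (hlam : 0 < lam) (hh11 : 0 < h11)
    (hh21 : 0 < h21) (hp2 : 0 < p2) (hr2 : 0 < r2)
    (hlt : r2 < Real.logb 2 (1 + h21 * p2))
    (pth pf ph : ℝ)
    (hpth : pth = (1 / h11) * (h21 * p2 / (2 ^ r2 - 1) - 1))
    (hpf : pf = max 0 (1 / (Real.log 2 * lam) - 1 / h11))
    (hph : ph = max 0 (1 / (Real.log 2 * lam) - (1 + h21 * p2) / h11))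
    (hcase1 : ph < pth) (hcase2 : pth < pf) :
    IsMaxOn (fun p => min (Real.logb 2 (1 + h11 * p) - lam * p)
        (Real.logb 2 (1 + h11 * p + h21 * p2) - r2 - lam * p))
      (Set.Ici (0:ℝ)) pth ∧
    Real.logb 2 (1 + h11 * pth) - lam * pth =
      Real.logb 2 (1 + h11 * pth + h21 * p2) - r2 - lam * pth :=
  stmt_8_general lam h11 h21 p2 r2 hlam hh11 hr2 pth pf ph hpth hpf hph hcase1 hcase2
end

section
/- Let x* > 0, δ* ≥ 0 satisfy the KKT conditions: x* = 1/((ln2)(μ − δ*)·F(x*)) − ζ, x*·δ* = 0, where F(x) = (1 + h11x)/(1 + h11x + ν h21 p2), ζ = (1+h21p2)/h11, and μ > 0, ν > 0, h11, h21, p2 > 0. If x* > 0 then δ* = 0 and x* is the unique positive root of x = 1/((ln2)μ·F(x)) − ζ; conversely if 1/((ln2)μ·F(0)) − ζ ≤ 0 then x* = 0 satisfies the KKT conditions with some δ* ≥ 0. -/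
/-!
Writing `u = 1 + h₁₁ y` and `A = ν h₂₁ p₂`, one has `1 / F y = 1 + A / u`, so a positive root
of the water-filling equation is a point where the strictly increasing `y ↦ y + ζ` meets the
antitone `y ↦ (μ ln 2)⁻¹ (1 + A / (1 + h₁₁ y))`; there is at most one such point. At `x = 0`
the stationarity equation is solved for `δ`, and the hypothesis on the water level at zero
is exactly `δ ≥ 0`.
-/

open Set

theorem eq_of_strictMonoOn_of_antitoneOn {α β : Type*} [LinearOrder α] [Preorder β]
    {f g : α → β} {s : Set α} (hf : StrictMonoOn f s) (hg : AntitoneOn g s) {x y : α}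
    (hx : x ∈ s) (hy : y ∈ s) (hfgx : f x = g x) (hfgy : f y = g y) : x = y := by
  by_contra hne
  rcases lt_or_gt_of_ne hne with hxy | hyx
  · exact (hf hx hy hxy).not_ge (hfgy ▸ hfgx ▸ hg hx hy hxy.le)
  · exact (hf hy hx hyx).not_ge (hfgx ▸ hfgy ▸ hg hy hx hyx.le)

lemma one_div_mul_div_add_self {c u : ℝ} (A : ℝ) (hu : u ≠ 0) :
    1 / (c * (u / (u + A))) = c⁻¹ * (1 + A / u) := by
  rw [one_div, mul_inv, inv_div, add_div, div_self hu]

lemma antitoneOn_inv_mul_one_add_div {a A c : ℝ} (ha : 0 ≤ a) (hA : 0 ≤ A) (hc : 0 ≤ c) :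
    AntitoneOn (fun y => c⁻¹ * (1 + A / (1 + a * y))) (Ici 0) := by
  intro x hx y _ hxy
  simp only [mem_Ici] at hx
  dsimp only
  gcongr

lemma eq_of_waterfilling {a A c z x y : ℝ} (ha : 0 ≤ a) (hA : 0 ≤ A) (hc : 0 ≤ c)
    (hx : 0 ≤ x) (hy : 0 ≤ y)
    (hxeq : x = 1 / (c * ((1 + a * x) / (1 + a * x + A))) - z)
    (hyeq : y = 1 / (c * ((1 + a * y) / (1 + a * y + A))) - z) : x = y := by
  have level {t : ℝ} (ht : 0 ≤ t) (h : t = 1 / (c * ((1 + a * t) / (1 + a * t + A))) - z) :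
      t + z = c⁻¹ * (1 + A / (1 + a * t)) := by
    rw [← one_div_mul_div_add_self A (by positivity : 1 + a * t ≠ 0)]
    linarith
  exact eq_of_strictMonoOn_of_antitoneOn (fun _ _ _ _ h => add_lt_add_left h z)
    (antitoneOn_inv_mul_one_add_div ha hA hc) hx hy (level hx hxeq) (level hy hyeq)

lemma exists_multiplier_of_level_nonpos {L μ q ζ : ℝ} (hL : 0 < L) (hμ : 0 < μ) (hq : 0 < q)
    (hζ : 0 < ζ) (h : 1 / (L * μ * q) - ζ ≤ 0) :
    ∃ δ, 0 ≤ δ ∧ (0 : ℝ) = 1 / (L * (μ - δ) * q) - ζ := by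
  refine ⟨μ - 1 / (L * q * ζ), ?_, ?_⟩
  · have : 1 ≤ ζ * (L * μ * q) := by
      rwa [sub_nonpos, div_le_iff₀ (by positivity)] at h
    rw [sub_nonneg, div_le_iff₀ (by positivity)]
    linarith
  · field_simp
    ring

/-- KKT conditions for the per-subcarrier subproblem of (P6): a strictly
positive KKT point has zero multiplier and is the unique positive root of the
biased water-filling equation; conversely, if the unconstrained water level is
nonpositive at zero then x = 0 satisfies the KKT conditions with some δ ≥ 0. -/
theorem stmt_19 (h11 h21 p2 mu nu : ℝ) (hh11 : 0 < h11) (hh21 : 0 < h21)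
    (hp2 : 0 < p2) (hmu : 0 < mu) (hnu : 0 < nu)
    (F : ℝ → ℝ)
    (hF : F = fun x => (1 + h11 * x) / (1 + h11 * x + nu * (h21 * p2)))
    (zeta : ℝ) (hzeta : zeta = (1 + h21 * p2) / h11) :
    (∀ xstar dstar : ℝ, 0 < xstar → 0 ≤ dstar → xstar * dstar = 0 →
      xstar = 1 / (Real.log 2 * (mu - dstar) * F xstar) - zeta →
      dstar = 0 ∧ xstar = 1 / (Real.log 2 * mu * F xstar) - zeta ∧
        ∀ y : ℝ, 0 < y → y = 1 / (Real.log 2 * mu * F y) - zeta → y = xstar) ∧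
    (1 / (Real.log 2 * mu * F 0) - zeta ≤ 0 →
      ∃ dstar : ℝ, 0 ≤ dstar ∧
        (0:ℝ) = 1 / (Real.log 2 * (mu - dstar) * F 0) - zeta ∧
        (0:ℝ) * dstar = 0) := by
  have hlog : 0 < Real.log 2 := Real.log_pos one_lt_two
  have hzeta_pos : 0 < zeta := hzeta ▸ by positivity
  subst hF
  refine ⟨fun x d hx _ hxd hxeq => ?_, fun hlevel => ?_⟩
  · obtain rfl : d = 0 := (mul_eq_zero.1 hxd).resolve_left hx.ne'
    rw [sub_zero] at hxeq
    exact ⟨rfl, hxeq, fun y hy hyeq =>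
      eq_of_waterfilling hh11.le (by positivity) (by positivity) hy.le hx.le hyeq hxeq⟩
  · obtain ⟨d, hd, hd_eq⟩ :=
      exists_multiplier_of_level_nonpos hlog hmu (by positivity) hzeta_pos hlevel
    exact ⟨d, hd, hd_eq, zero_mul d⟩
end
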